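/- arXiv:2409.10736 — 2 statements merged into one kernel-verified Lean document; each statement's English description precedes it below -/
import Mathlib

section
/- Let ρ : Ω → ℝ be positive and twice differentiable with |∇ρ| ≤ C₁ and |∇²ρ| ≤ C₂·ρ^{-1} on Ω, and let h > 0 and ρ̃ = √(ρ² + h²). Then pointwise |∇²ρ̃(x)| ≤ c · ρ̃(x)^{-1} for a constant c depending only on C₁ and C₂. -/
/-!
Write `ρ̃ = g ∘ ρ` with `g t = √(t² + h²)`. Then `g' t = t / g t` and `g'' t = h² / (g t)³`, so
`∇²ρ̃ = (ρ / ρ̃) ∇²ρ + (h² / ρ̃³) ∇ρ ⊗ ∇ρ`. Since `h ≤ ρ̃`, this is bounded by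
`(ρ |∇²ρ| + |∇ρ|²) / ρ̃ ≤ (C₂ + C₁²) / ρ̃`.
-/

open Real Filter Topology

section Scalar

variable {a t : ℝ}

lemma hasDerivAt_sqrt_sq_add_sq (ha : a ≠ 0) :
    HasDerivAt (fun s => √(s ^ 2 + a ^ 2)) (t / √(t ^ 2 + a ^ 2)) t := by
  have hpos : 0 < t ^ 2 + a ^ 2 := by positivity
  have hsq : HasDerivAt (fun s : ℝ => s ^ 2 + a ^ 2) (2 * t) t := by
    simpa using (hasDerivAt_pow 2 t).add_const (a ^ 2)
  refine ((hasDerivAt_sqrt hpos.ne').comp t hsq).congr_deriv ?_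
  field_simp

lemma hasDerivAt_div_sqrt_sq_add_sq (ha : a ≠ 0) :
    HasDerivAt (fun s => s / √(s ^ 2 + a ^ 2)) (a ^ 2 / √(t ^ 2 + a ^ 2) ^ 3) t := by
  have hpos : 0 < t ^ 2 + a ^ 2 := by positivity
  have hsqrt : 0 < √(t ^ 2 + a ^ 2) := sqrt_pos.2 hpos
  refine ((hasDerivAt_id t).div (hasDerivAt_sqrt_sq_add_sq ha) hsqrt.ne').congr_deriv ?_
  simp only [id]
  field_simp
  linear_combination sq_sqrt hpos.le

end Scalar

section Hessian

variable {E : Type*} [NormedAddCommGroup E] [NormedSpace ℝ E] {ρ : E → ℝ} {a : ℝ} {x : E}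

lemma hasFDerivAt_sqrt_sq_add_sq (ha : a ≠ 0) (hρ : DifferentiableAt ℝ ρ x) :
    HasFDerivAt (fun y => √(ρ y ^ 2 + a ^ 2))
      ((ρ x / √(ρ x ^ 2 + a ^ 2)) • fderiv ℝ ρ x) x :=
  (hasDerivAt_sqrt_sq_add_sq ha).comp_hasFDerivAt x hρ.hasFDerivAt

lemma fderiv_fderiv_sqrt_sq_add_sq (ha : a ≠ 0)
    (hρ : ∀ᶠ y in 𝓝 x, DifferentiableAt ℝ ρ y) (hDρ : DifferentiableAt ℝ (fderiv ℝ ρ) x) :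
    fderiv ℝ (fderiv ℝ fun y => √(ρ y ^ 2 + a ^ 2)) x =
      (ρ x / √(ρ x ^ 2 + a ^ 2)) • fderiv ℝ (fderiv ℝ ρ) x +
        ((a ^ 2 / √(ρ x ^ 2 + a ^ 2) ^ 3) • fderiv ℝ ρ x).smulRight (fderiv ℝ ρ x) := by
  have hfderiv : fderiv ℝ (fun y => √(ρ y ^ 2 + a ^ 2)) =ᶠ[𝓝 x]
      fun y => (ρ y / √(ρ y ^ 2 + a ^ 2)) • fderiv ℝ ρ y := by
    filter_upwards [hρ] with y hy
    exact (hasFDerivAt_sqrt_sq_add_sq ha hy).fderiv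
  have hcoeff : HasFDerivAt (fun y => ρ y / √(ρ y ^ 2 + a ^ 2))
      ((a ^ 2 / √(ρ x ^ 2 + a ^ 2) ^ 3) • fderiv ℝ ρ x) x :=
    (hasDerivAt_div_sqrt_sq_add_sq ha).comp_hasFDerivAt x hρ.self_of_nhds.hasFDerivAt
  rw [hfderiv.fderiv_eq]
  exact (hcoeff.smul hDρ.hasFDerivAt).fderiv

lemma norm_fderiv_fderiv_sqrt_sq_add_sq_le (ha : a ≠ 0)
    (hρ : ∀ᶠ y in 𝓝 x, DifferentiableAt ℝ ρ y) (hDρ : DifferentiableAt ℝ (fderiv ℝ ρ) x) :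
    ‖fderiv ℝ (fderiv ℝ fun y => √(ρ y ^ 2 + a ^ 2)) x‖ ≤
      (|ρ x| * ‖fderiv ℝ (fderiv ℝ ρ) x‖ + ‖fderiv ℝ ρ x‖ ^ 2) / √(ρ x ^ 2 + a ^ 2) := by
  rw [fderiv_fderiv_sqrt_sq_add_sq ha hρ hDρ]
  set σ := √(ρ x ^ 2 + a ^ 2) with hσ_def
  have hpos : 0 < ρ x ^ 2 + a ^ 2 := by positivity
  have hσ : 0 < σ := sqrt_pos.2 hpos
  have ha_le : a ^ 2 ≤ σ ^ 2 := by
    rw [hσ_def, sq_sqrt hpos.le]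
    linarith [sq_nonneg (ρ x)]
  have hcoeff : a ^ 2 / σ ^ 3 ≤ σ⁻¹ := by
    rw [div_le_iff₀ (by positivity)]
    calc a ^ 2 ≤ σ ^ 2 := ha_le
      _ = σ⁻¹ * σ ^ 3 := by field_simp
  calc _ ≤ ‖(ρ x / σ) • fderiv ℝ (fderiv ℝ ρ) x‖ +
          ‖((a ^ 2 / σ ^ 3) • fderiv ℝ ρ x).smulRight (fderiv ℝ ρ x)‖ :=
        ContinuousLinearMap.opNorm_add_le _ _
    _ ≤ ‖ρ x / σ‖ * ‖fderiv ℝ (fderiv ℝ ρ) x‖ + ‖a ^ 2 / σ ^ 3‖ * ‖fderiv ℝ ρ x‖ ^ 2 := by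
      rw [ContinuousLinearMap.norm_smulRight_apply, norm_smul (a ^ 2 / σ ^ 3) (fderiv ℝ ρ x),
        mul_assoc, ← sq]
      gcongr
      exact ContinuousLinearMap.opNorm_smul_le _ _
    _ = |ρ x| / σ * ‖fderiv ℝ (fderiv ℝ ρ) x‖ + a ^ 2 / σ ^ 3 * ‖fderiv ℝ ρ x‖ ^ 2 := by
      rw [norm_div, Real.norm_eq_abs, Real.norm_eq_abs, Real.norm_eq_abs, abs_of_pos hσ,
        abs_of_nonneg (by positivity : 0 ≤ a ^ 2 / σ ^ 3)]
    _ ≤ |ρ x| / σ * ‖fderiv ℝ (fderiv ℝ ρ) x‖ + σ⁻¹ * ‖fderiv ℝ ρ x‖ ^ 2 := by gcongr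
    _ = (|ρ x| * ‖fderiv ℝ (fderiv ℝ ρ) x‖ + ‖fderiv ℝ ρ x‖ ^ 2) / σ := by ring

end Hessian

theorem stmt3_general (C₁ C₂ : ℝ) (hC₂ : 0 ≤ C₂) :
    ∃ c > (0 : ℝ), ∀ (Ω : Set (EuclideanSpace ℝ (Fin 3))), IsOpen Ω →
      ∀ (ρ : EuclideanSpace ℝ (Fin 3) → ℝ) (h : ℝ), 0 < h →
      (∀ x ∈ Ω, 0 < ρ x) →
      (∀ x ∈ Ω, DifferentiableAt ℝ ρ x) →
      (∀ x ∈ Ω, DifferentiableAt ℝ (fderiv ℝ ρ) x) →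
      (∀ x ∈ Ω, ‖fderiv ℝ ρ x‖ ≤ C₁) →
      (∀ x ∈ Ω, ‖fderiv ℝ (fderiv ℝ ρ) x‖ ≤ C₂ * (ρ x)⁻¹) →
      ∀ x ∈ Ω,
        ‖fderiv ℝ (fderiv ℝ (fun y => Real.sqrt (ρ y ^ 2 + h ^ 2))) x‖ ≤
          c * (Real.sqrt (ρ x ^ 2 + h ^ 2))⁻¹ := by
  refine ⟨C₁ ^ 2 + C₂ + 1, by positivity, ?_⟩
  intro Ω hΩ ρ h hh hpos hDρ hD2ρ hgrad hhess x hx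
  have hρ : ∀ᶠ y in 𝓝 x, DifferentiableAt ℝ ρ y := eventually_of_mem (hΩ.mem_nhds hx) hDρ
  have hcurv : |ρ x| * ‖fderiv ℝ (fderiv ℝ ρ) x‖ ≤ C₂ := by
    rw [abs_of_pos (hpos x hx)]
    calc _ ≤ ρ x * (C₂ * (ρ x)⁻¹) := by gcongr; exacts [(hpos x hx).le, hhess x hx]
      _ = C₂ := by field_simp [(hpos x hx).ne']
  have hgrad_sq : ‖fderiv ℝ ρ x‖ ^ 2 ≤ C₁ ^ 2 := pow_le_pow_left₀ (norm_nonneg _) (hgrad x hx) 2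
  calc _ ≤ (|ρ x| * ‖fderiv ℝ (fderiv ℝ ρ) x‖ + ‖fderiv ℝ ρ x‖ ^ 2) / √(ρ x ^ 2 + h ^ 2) :=
        norm_fderiv_fderiv_sqrt_sq_add_sq_le hh.ne' hρ (hD2ρ x hx)
    _ ≤ (C₁ ^ 2 + C₂ + 1) * (√(ρ x ^ 2 + h ^ 2))⁻¹ := by
        rw [div_eq_mul_inv]
        gcongr ?_ * _
        linarith

/-- If `ρ > 0` is twice differentiable on the open set `Ω` with
`|∇ρ| ≤ C₁` and `|∇²ρ| ≤ C₂ ρ⁻¹`, then for `ρ̃ = √(ρ² + h²)` one has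
`|∇²ρ̃(x)| ≤ c ρ̃(x)⁻¹` on `Ω`, `c` depending only on `C₁, C₂`. -/
theorem stmt3 (C₁ C₂ : ℝ) (hC₁ : 0 ≤ C₁) (hC₂ : 0 ≤ C₂) :
    ∃ c > (0 : ℝ), ∀ (Ω : Set (EuclideanSpace ℝ (Fin 3))), IsOpen Ω →
      ∀ (ρ : EuclideanSpace ℝ (Fin 3) → ℝ) (h : ℝ), 0 < h →
      (∀ x ∈ Ω, 0 < ρ x) →
      (∀ x ∈ Ω, DifferentiableAt ℝ ρ x) →
      (∀ x ∈ Ω, DifferentiableAt ℝ (fderiv ℝ ρ) x) →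
      (∀ x ∈ Ω, ‖fderiv ℝ ρ x‖ ≤ C₁) →
      (∀ x ∈ Ω, ‖fderiv ℝ (fderiv ℝ ρ) x‖ ≤ C₂ * (ρ x)⁻¹) →
      ∀ x ∈ Ω,
        ‖fderiv ℝ (fderiv ℝ (fun y => Real.sqrt (ρ y ^ 2 + h ^ 2))) x‖ ≤
          c * (Real.sqrt (ρ x ^ 2 + h ^ 2))⁻¹ :=
  stmt3_general C₁ C₂ hC₂
end

section
/- Let j and j_h be two functionals of the form j(q) = ½‖Sq − u_d‖² + (α/2)‖q‖²_H and j_h(q) = ½‖S_h q − u_d‖² + (α/2)‖q‖²_H with bounded linear S, S_h : H → L²(Ω), and let q̄ minimize j over H and q̄_h minimize j_h over a closed subspace Q_h ⊂ H. Then for any q_h ∈ Q_h, α‖q̄ − q̄_h‖²_H ≤ j_h'(q̄)(q̄ − q̄_h) − j'(q̄)(q̄ − q̄_h) + j_h'(q̄_h)(q_h − q̄). -/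
open MeasureTheory
open scoped RealInnerProductSpace

/-- Basic error decomposition for Galerkin optimal control: if `q̄`
satisfies `j'(q̄) = 0` and `q̄_h ∈ Q_h` satisfies `j_h'(q̄_h)(δq_h) = 0` for all
`δq_h ∈ Q_h`, then for every `q_h ∈ Q_h`,
`α‖q̄ − q̄_h‖² ≤ j_h'(q̄)(q̄ − q̄_h) − j'(q̄)(q̄ − q̄_h) + j_h'(q̄_h)(q_h − q̄)`. -/
theorem stmt9 {H : Type*} [NormedAddCommGroup H] [InnerProductSpace ℝ H]
    {X : Type*} [MeasurableSpace X] (μ : Measure X)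
    (S Sh : H →L[ℝ] Lp ℝ 2 μ) (ud : Lp ℝ 2 μ) (α : ℝ) (hα : 0 < α)
    (Qh : Submodule ℝ H) (qbar qbarh : H) (hqbarh : qbarh ∈ Qh)
    (hopt : ∀ δq : H, ⟪S qbar - ud, S δq⟫ + α * ⟪qbar, δq⟫ = 0)
    (hopth : ∀ δq ∈ Qh, ⟪Sh qbarh - ud, Sh δq⟫ + α * ⟪qbarh, δq⟫ = 0) :
    ∀ qh ∈ Qh,
      α * ‖qbar - qbarh‖ ^ 2 ≤
        (⟪Sh qbar - ud, Sh (qbar - qbarh)⟫ + α * ⟪qbar, qbar - qbarh⟫)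
        - (⟪S qbar - ud, S (qbar - qbarh)⟫ + α * ⟪qbar, qbar - qbarh⟫)
        + (⟪Sh qbarh - ud, Sh (qh - qbar)⟫ + α * ⟪qbarh, qh - qbar⟫) := by
  intro qh hqh
  have h1 := hopt (qbar - qbarh)
  have h2 := hopth (qh - qbarh) (Qh.sub_mem hqh hqbarh)
  have key : (⟪Sh qbar - ud, Sh (qbar - qbarh)⟫ + α * ⟪qbar, qbar - qbarh⟫)
        - (⟪S qbar - ud, S (qbar - qbarh)⟫ + α * ⟪qbar, qbar - qbarh⟫)
        + (⟪Sh qbarh - ud, Sh (qh - qbar)⟫ + α * ⟪qbarh, qh - qbar⟫)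
      = ‖Sh (qbar - qbarh)‖ ^ 2 + α * ‖qbar - qbarh‖ ^ 2 := by
    have e1 : (qh : H) - qbar = (qh - qbarh) - (qbar - qbarh) := by abel
    rw [e1]
    simp only [map_sub, inner_sub_left, inner_sub_right] at *
    rw [← real_inner_self_eq_norm_sq, ← real_inner_self_eq_norm_sq]
    simp only [inner_sub_left, inner_sub_right]
    ring_nf
    ring_nf at h1 h2
    linarith
  rw [key]
  nlinarith [sq_nonneg ‖Sh (qbar - qbarh)‖]
end
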